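/- Every point (x,y) ∈ Δ with both coordinates rational belongs to ∂Δ ∪ ⋃_{n≥1} ⋃_{k_1,…,k_n ≥ 1} H_{k_1}∘H_{k_2}∘⋯∘H_{k_n}(∂Δ), where ∂Δ denotes the boundary of the triangle Δ and the union is over all n ≥ 1 and all finite sequences of positive integers k_1, …, k_n. -/

import Mathlib

/-- The unit simplex `Δ = {(u,v) : u ≥ 0, v ≥ 0, u+v ≤ 1}`. -/
def Delta : Set (ℝ × ℝ) := {p | 0 ≤ p.1 ∧ 0 ≤ p.2 ∧ p.1 + p.2 ≤ 1}

/-- The map `H_k(u,v) = (v, 1-v)/D_k` where `D_k = k(1-v) + 1 - u`. -/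
noncomputable def Hmap (k : ℕ) (p : ℝ × ℝ) : ℝ × ℝ :=
  (p.2 / ((k : ℝ) * (1 - p.2) + 1 - p.1), (1 - p.2) / ((k : ℝ) * (1 - p.2) + 1 - p.1))

/-- `Hcomp k n = H_{k 1} ∘ H_{k 2} ∘ ⋯ ∘ H_{k n}`. -/
noncomputable def Hcomp (k : ℕ → ℕ) : ℕ → (ℝ × ℝ) → (ℝ × ℝ)
  | 0 => id
  | n + 1 => Hcomp k n ∘ Hmap (k (n + 1))

/-!
Write a rational point of `Δ` as `(a/c, b/c)` with `a, b, c ∈ ℕ`, `a + b ≤ c`, and induct on `c`.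
If the point is not on `∂Δ`, then `a, b > 0` and `a + b < c`; with `k = ⌊(c - a)/b⌋ ≥ 1` one has
`(a/c, b/c) = H_k(a'/c', a/c')` where `c' = a + b < c` and `a' = a + b + kb - c`, and the choice
of `k` is exactly what makes `0 ≤ a'` and `a' + a ≤ c'`, so the preimage is again a rational point
of `Δ`, now with a smaller denominator.
-/

open Filter Topology

lemma mem_closure_compl_of_forall_neg {E : Type*} [TopologicalSpace E] [AddCommGroup E]
    [Module ℝ E] [ContinuousAdd E] [ContinuousSMul ℝ E] {s : Set E} {p d : E}
    (h : ∀ t < (0 : ℝ), p + t • d ∉ s) : p ∈ closure sᶜ := by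
  have hline : Tendsto (fun t : ℝ => p + t • d) (𝓝[<] 0) (𝓝 p) := by
    have hcont : Continuous fun t : ℝ => p + t • d := by fun_prop
    simpa using (hcont.tendsto 0).mono_left nhdsWithin_le_nhds
  exact mem_closure_of_tendsto hline (eventually_nhdsWithin_of_forall h)

lemma mem_frontier_Delta {p : ℝ × ℝ} (hp : p ∈ Delta)
    (h : p.1 = 0 ∨ p.2 = 0 ∨ p.1 + p.2 = 1) : p ∈ frontier Delta := by
  rw [frontier_eq_closure_inter_closure]
  refine ⟨subset_closure hp, ?_⟩
  rcases h with h | h | h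
  · refine mem_closure_compl_of_forall_neg (d := (1, 0)) fun t ht hq => ?_
    have := hq.1
    simp only [Prod.fst_add, Prod.smul_fst, smul_eq_mul] at this
    linarith
  · refine mem_closure_compl_of_forall_neg (d := (0, 1)) fun t ht hq => ?_
    have := hq.2.1
    simp only [Prod.snd_add, Prod.smul_snd, smul_eq_mul] at this
    linarith
  · refine mem_closure_compl_of_forall_neg (d := (-1, 0)) fun t ht hq => ?_
    have := hq.2.2
    simp only [Prod.fst_add, Prod.snd_add, Prod.smul_fst, Prod.smul_snd, smul_eq_mul] at this
    linarith

lemma Hcomp_congr {k k' : ℕ → ℕ} :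
    ∀ {n}, (∀ i, 1 ≤ i → i ≤ n → k i = k' i) → Hcomp k n = Hcomp k' n
  | 0, _ => rfl
  | n + 1, h => by
    rw [Hcomp, Hcomp, Hcomp_congr fun i h₁ h₂ => h i h₁ (Nat.le_succ_of_le h₂),
      h (n + 1) (by omega) le_rfl]

lemma Hcomp_succ' (k : ℕ → ℕ) :
    ∀ n, Hcomp k (n + 1) = Hmap (k 1) ∘ Hcomp (fun i => k (i + 1)) n
  | 0 => rfl
  | n + 1 => by
    rw [Hcomp, Hcomp_succ' k n]
    rfl

def boundaryOrbit : Set (ℝ × ℝ) :=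
  {p | ∃ n k, (∀ i, 1 ≤ k i) ∧ p ∈ Hcomp k n '' frontier Delta}

lemma frontier_subset_boundaryOrbit : frontier Delta ⊆ boundaryOrbit :=
  fun p hp => ⟨0, fun _ => 1, fun _ => le_rfl, p, hp, rfl⟩

lemma Hmap_mem_boundaryOrbit {j : ℕ} (hj : 1 ≤ j) {q : ℝ × ℝ} (hq : q ∈ boundaryOrbit) :
    Hmap j q ∈ boundaryOrbit := by
  obtain ⟨n, k, hk, w, hw, rfl⟩ := hq
  refine ⟨n + 1, fun i => if i ≤ 1 then j else k (i - 1), fun i => ?_, w, hw, ?_⟩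
  · dsimp only
    split_ifs
    exacts [hj, hk _]
  · rw [Hcomp_succ', Function.comp_apply, if_pos le_rfl,
      Hcomp_congr (k' := k) fun i hi _ => by simp [show ¬ i + 1 ≤ 1 by omega]]

lemma Hmap_div_add (k : ℕ) (a b c : ℝ) (hab : a + b ≠ 0) (hc : c ≠ 0) :
    Hmap k ((a + b + k * b - c) / (a + b), a / (a + b)) = (a / c, b / c) := by
  have hD : (k : ℝ) * (1 - a / (a + b)) + 1 - (a + b + k * b - c) / (a + b) = c / (a + b) := by
    field_simp
    ring
  have hv : 1 - a / (a + b) = b / (a + b) := by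
    field_simp
    ring
  simp only [Hmap]
  rw [hD, hv]
  ext <;> field_simp

lemma div_mem_Delta {a b c : ℕ} (hab : a + b ≤ c) : ((a : ℝ) / c, (b : ℝ) / c) ∈ Delta := by
  refine ⟨by positivity, by positivity, ?_⟩
  rw [← add_div]
  exact div_le_one_of_le₀ (by exact_mod_cast hab) (Nat.cast_nonneg c)

lemma div_mem_boundaryOrbit {a b c : ℕ} (hc : 0 < c) (hab : a + b ≤ c) :
    ((a : ℝ) / c, (b : ℝ) / c) ∈ boundaryOrbit := by
  induction c using Nat.strong_induction_on generalizing a b with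
  | _ c ih =>
  have hcR : (c : ℝ) ≠ 0 := by positivity
  by_cases hboundary : a = 0 ∨ b = 0 ∨ a + b = c
  · refine frontier_subset_boundaryOrbit (mem_frontier_Delta (div_mem_Delta hab) ?_)
    rcases hboundary with rfl | rfl | h
    · simp
    · simp
    · right; right
      rw [← add_div, div_eq_one_iff_eq hcR]
      exact_mod_cast h
  push Not at hboundary
  obtain ⟨ha, hb, habc⟩ := hboundary
  set k := (c - a) / b
  have hk : 1 ≤ k := (Nat.one_le_div_iff (by omega)).mpr (by omega)
  have hkb : k * b ≤ c - a := Nat.div_mul_le_self _ _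
  have hkb' : c - a < k * b + b := Nat.lt_div_mul_add (by omega)
  have hpre := ih (a + b) (by omega) (a := a + b + k * b - c) (b := a) (by omega) (by omega)
  have hcast : ((a + b + k * b - c : ℕ) : ℝ) = a + b + k * b - c := by
    rw [Nat.cast_sub (by omega)]
    push_cast
    ring
  have himage := Hmap_mem_boundaryOrbit hk hpre
  rwa [hcast, Nat.cast_add, Hmap_div_add k a b c (by positivity) hcR] at himage

lemma exists_nat_div_of_rat {x y : ℝ} (hx : ∃ q : ℚ, x = q) (hy : ∃ q : ℚ, y = q)
    (hx₀ : 0 ≤ x) (hy₀ : 0 ≤ y) : ∃ a b c : ℕ, 0 < c ∧ x = a / c ∧ y = b / c := by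
  obtain ⟨r, rfl⟩ := hx
  obtain ⟨s, rfl⟩ := hy
  lift r to ℚ≥0 using by exact_mod_cast hx₀
  lift s to ℚ≥0 using by exact_mod_cast hy₀
  refine ⟨r.num * s.den, s.num * r.den, r.den * s.den, by positivity, ?_, ?_⟩
  · rw [Rat.cast_nnratCast, NNRat.cast_def]
    push_cast
    rw [mul_div_mul_right _ _ (by positivity)]
  · rw [Rat.cast_nnratCast, NNRat.cast_def]
    push_cast
    rw [mul_comm (r.den : ℝ), mul_div_mul_right _ _ (by positivity)]

/-- every point of `Δ` with rational coordinates belongs to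
`∂Δ ∪ ⋃_{n≥1} ⋃_{k_1,…,k_n ≥ 1} H_{k_1} ∘ ⋯ ∘ H_{k_n}(∂Δ)`. -/
theorem statement10 (p : ℝ × ℝ) (hp : p ∈ Delta)
    (hx : ∃ qx : ℚ, p.1 = (qx : ℝ)) (hy : ∃ qy : ℚ, p.2 = (qy : ℝ)) :
    p ∈ frontier Delta ∨
      ∃ n : ℕ, 1 ≤ n ∧ ∃ k : ℕ → ℕ, (∀ i, 1 ≤ k i) ∧
        p ∈ Hcomp k n '' frontier Delta := by
  obtain ⟨a, b, c, hc, h₁, h₂⟩ := exists_nat_div_of_rat hx hy hp.1 hp.2.1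
  have hab : a + b ≤ c := by
    have hsum := hp.2.2
    rw [h₁, h₂, ← add_div, div_le_one (by positivity)] at hsum
    exact_mod_cast hsum
  obtain ⟨n, k, hk, hpk⟩ : p ∈ boundaryOrbit := by
    rw [← Prod.mk.eta (p := p), h₁, h₂]
    exact div_mem_boundaryOrbit hc hab
  rcases n with _ | n
  · left
    simpa [Hcomp] using hpk
  · exact Or.inr ⟨n + 1, by omega, k, hk, hpk⟩
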